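/- arXiv:1801.05714 — 3 statements merged into one kernel-verified Lean document; each statement's English description precedes it below -/
import Mathlib

section
/- Let k be a field and f, g ∈ k[Y] monic polynomials with g irreducible. Then the polynomial h(T) = (-1)^(deg g) · Res_Y(g(Y), f(Y) - T) ∈ k[T] is a power of some irreducible polynomial in k[T]. -/
open Polynomial

/-- The resultant of two polynomials, defined as the determinant of the Sylvester
matrix: the first `g.natDegree` rows contain the shifted coefficient sequences of `f`,
the remaining `f.natDegree` rows the shifted coefficient sequences of `g`. -/
noncomputable def resultant {R : Type*} [CommRing R] (f g : R[X]) : R :=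
  Matrix.det (Matrix.of fun (i j : Fin (f.natDegree + g.natDegree)) =>
    if (i : ℕ) < g.natDegree then
      if (i : ℕ) ≤ (j : ℕ) ∧ (j : ℕ) ≤ (i : ℕ) + f.natDegree then
        f.coeff (f.natDegree + i - j) else 0
    else
      if (i : ℕ) - g.natDegree ≤ (j : ℕ) ∧ (j : ℕ) ≤ (i : ℕ) - g.natDegree + g.natDegree then
        g.coeff (g.natDegree + ((i : ℕ) - g.natDegree) - (j : ℕ)) else 0)

/-!
Over an algebraic closure `L` of `k` write `g = ∏ (Y - αᵢ)`; then `h = ∏ (T - f(αᵢ))`. Each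
`f(αᵢ)` is the image of `β = f mod g` under a `k`-embedding `k[Y]/(g) → L`, hence a root of the
irreducible polynomial `p = minpoly k β`. So every monic irreducible factor of the monic
polynomial `h` shares a root with `p` and therefore equals `p`.
-/

-- The matrix above is Mathlib's `sylvester f g` transposed, with rows and columns reversed.
theorem resultant_eq_polynomial_resultant {R : Type*} [CommRing R] (f g : R[X]) :
    _root_.resultant f g = f.resultant g := by
  rw [Polynomial.resultant, ← Matrix.det_transpose,
    ← Matrix.det_submatrix_equiv_self Fin.revPerm (sylvester f g _ _).transpose]
  refine congrArg Matrix.det (Matrix.ext fun i j => ?_)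
  obtain ⟨c, rfl⟩ := Fin.revPerm.surjective i
  induction c using Fin.addCases with
  | left c =>
    simp only [Matrix.of_apply, Matrix.submatrix_apply, Matrix.transpose_apply, Fin.revPerm_apply,
      sylvester, Fin.addCases_left, Fin.rev_rev, Fin.val_rev, Set.mem_Icc, Fin.val_castAdd]
    split_ifs <;> first | rfl | omega | (congr 1; omega)
  | right c =>
    simp only [Matrix.of_apply, Matrix.submatrix_apply, Matrix.transpose_apply, Fin.revPerm_apply,
      sylvester, Fin.addCases_right, Fin.rev_rev, Fin.val_rev, Set.mem_Icc, Fin.val_natAdd]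
    split_ifs <;> first | rfl | omega | (congr 1; omega)

theorem map_resultant_map_C_sub_X {R S : Type*} [CommRing R] [CommRing S] {φ : R →+* S}
    (hφ : Function.Injective φ) (g q : R[X]) :
    ((g.map C).resultant (q.map C - C X)).map φ
      = ((g.map φ).map C).resultant ((q.map φ).map C - C X) := by
  have hΦ : Function.Injective (mapRingHom φ) := map_injective φ hφ
  have hC : (mapRingHom φ).comp C = C.comp φ := by ext; simp
  have hg : (g.map C).map (mapRingHom φ) = (g.map φ).map C := by
    simp only [Polynomial.map_map, hC]
  have hq : (q.map C - C X).map (mapRingHom φ) = (q.map φ).map C - C X := by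
    simp [Polynomial.map_map, hC]
  rw [← hg, ← hq, natDegree_map_eq_of_injective hΦ, natDegree_map_eq_of_injective hΦ,
    resultant_map_map, coe_mapRingHom]

theorem neg_one_pow_mul_resultant_map_C_sub_X {R : Type*} [CommRing R] [IsDomain R]
    {g : R[X]} (hg : g.Monic) (hsplit : g.Splits) (q : R[X]) :
    (-1 : R[X]) ^ g.natDegree * (g.map C).resultant (q.map C - C X)
      = ((g.roots.map q.eval).map fun a => X - C a).prod := by
  rw [resultant_eq_prod_eval _ _ _ le_rfl (hsplit.map C), (hg.map C).leadingCoeff, one_pow,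
    one_mul, hsplit.roots_map_of_injective C_injective, hsplit.natDegree_eq_card_roots,
    Multiset.map_map, ← Multiset.card_map ((fun x => eval x (q.map C - C X)) ∘ C) g.roots,
    ← Multiset.prod_map_neg, Multiset.map_map, Multiset.map_map]
  refine congrArg _ (Multiset.map_congr rfl fun α _ => ?_)
  simp [eval_map, eval₂_at_apply]

theorem aeval_minpoly_mk_of_aeval_eq_zero {k A : Type*} [Field k] [CommRing A] [Algebra k A]
    {g : k[X]} (f : k[X]) {α : A} (hα : aeval α g = 0) :
    aeval (aeval α f) (minpoly k (AdjoinRoot.mk g f)) = 0 := by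
  let φ := AdjoinRoot.liftAlgHom g (Algebra.ofId k A) α hα
  have hφ : φ (AdjoinRoot.mk g f) = aeval α f := AdjoinRoot.liftAlgHom_mk ..
  rw [← hφ, aeval_algHom_apply, minpoly.aeval, map_zero]

theorem aeval_minpoly_mk_of_mem_roots_map {k A : Type*} [Field k] [CommRing A] [IsDomain A]
    [Algebra k A]
    (f : k[X]) {g : k[X]} (hg : g ≠ 0) {t : A}
    (ht : t ∈ (g.map (algebraMap k A)).roots.map (f.map (algebraMap k A)).eval) :
    aeval t (minpoly k (AdjoinRoot.mk g f)) = 0 := by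
  obtain ⟨α, hα, rfl⟩ := Multiset.mem_map.mp ht
  rw [eval_map, ← aeval_def]
  exact aeval_minpoly_mk_of_aeval_eq_zero f
    ((mem_roots_map_of_injective (algebraMap k A).injective hg).mp hα)

theorem eq_pow_of_forall_aeval_eq_zero {k L : Type*} [Field k] [Field L] [IsAlgClosed L]
    [Algebra k L] {p h : k[X]} (hp : Irreducible p) (hpm : p.Monic) (hh : h.Monic)
    (hroots : ∀ t : L, aeval t h = 0 → aeval t p = 0) : ∃ n, h = p ^ n := by
  classical
  have factor_eq : ∀ {q}, q ∈ UniqueFactorizationMonoid.normalizedFactors h → q = p := by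
    intro q hq
    obtain ⟨hqirr, hqm, r, hr⟩ := (Polynomial.mem_normalizedFactors_iff hh.ne_zero).mp hq
    obtain ⟨t, ht⟩ := IsAlgClosed.exists_aeval_eq_zero L q (degree_pos_of_irreducible hqirr).ne'
    have hth : aeval t h = 0 := by rw [hr, map_mul, ht, zero_mul]
    rw [minpoly.eq_of_irreducible_of_monic hqirr ht hqm,
      minpoly.eq_of_irreducible_of_monic hp (hroots t hth) hpm]
  obtain ⟨n, hn⟩ :=
    UniqueFactorizationMonoid.exists_associated_prime_pow_of_unique_normalized_factor
      factor_eq hh.ne_zero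
  exact ⟨n, (eq_of_monic_of_associated (hpm.pow n) hh hn).symm⟩

theorem map_neg_one_pow_mul_resultant_eq_prod {k R : Type*} [Field k] [CommRing R] [IsDomain R]
    (ι : k →+* R) (f : k[X]) {g : k[X]} (hg : g.Monic) (hsplit : (g.map ι).Splits) :
    ((-1 : k[X]) ^ g.natDegree * _root_.resultant (g.map C) (f.map C - C X)).map ι
      = (((g.map ι).roots.map (f.map ι).eval).map fun a => X - C a).prod := by
  rw [← neg_one_pow_mul_resultant_map_C_sub_X (hg.map ι) hsplit, hg.natDegree_map,
    ← map_resultant_map_C_sub_X ι.injective, ← resultant_eq_polynomial_resultant]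
  simp

theorem resultant_power_of_irreducible_general {k : Type*} [Field k]
    (f g : k[X]) (hg : g.Monic) (hgirr : Irreducible g) :
    ∃ (p : k[X]) (n : ℕ), Irreducible p ∧ 0 < n ∧
      (-1 : k[X]) ^ g.natDegree * _root_.resultant (g.map C) (f.map C - C X) = p ^ n := by
  set h := (-1 : k[X]) ^ g.natDegree * _root_.resultant (g.map C) (f.map C - C X)
  let ι := algebraMap k (AlgebraicClosure k)
  set s := (g.map ι).roots.map (f.map ι).eval
  have hmap : h.map ι = (s.map fun a => X - C a).prod :=
    map_neg_one_pow_mul_resultant_eq_prod ι f hg (IsAlgClosed.splits _)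
  have hmonic : h.Monic := monic_map_iff.mp (hmap ▸ monic_multisetProd_X_sub_C s)
  have hdeg : h.natDegree = g.natDegree := by
    rw [← natDegree_map ι, hmap, natDegree_multiset_prod_X_sub_C_eq_card, Multiset.card_map,
      ← (IsAlgClosed.splits _).natDegree_eq_card_roots, hg.natDegree_map]
  have : Fact (Irreducible g) := ⟨hgirr⟩
  have := (AdjoinRoot.powerBasis hg.ne_zero).finite
  have hβ : IsIntegral k (AdjoinRoot.mk g f) := .of_finite k _
  have hroots (t : AlgebraicClosure k) (ht : aeval t h = 0) :
      aeval t (minpoly k (AdjoinRoot.mk g f)) = 0 := by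
    rw [aeval_def, eval₂_eq_eval_map, hmap] at ht
    refine aeval_minpoly_mk_of_mem_roots_map f hg.ne_zero ?_
    show t ∈ s
    rw [← roots_multiset_prod_X_sub_C s]
    exact (mem_roots (monic_multisetProd_X_sub_C s).ne_zero).mpr ht
  obtain ⟨n, hn⟩ :=
    eq_pow_of_forall_aeval_eq_zero (minpoly.irreducible hβ) (minpoly.monic hβ) hmonic hroots
  refine ⟨_, n, minpoly.irreducible hβ, Nat.pos_of_ne_zero fun hn0 => ?_, hn⟩
  have := hgirr.natDegree_pos
  rw [← hdeg, hn, hn0, pow_zero, natDegree_one] at this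
  exact this.false

/-- If `f, g ∈ k[Y]` are monic and `g` is irreducible, then
`h = (-1)^(deg g) · Res_Y(g, f - T) ∈ k[T]` is a power of an irreducible polynomial. -/
theorem resultant_power_of_irreducible {k : Type*} [Field k]
    (f g : k[X]) (hf : f.Monic) (hg : g.Monic) (hgirr : Irreducible g) :
    ∃ (p : k[X]) (n : ℕ), Irreducible p ∧ 0 < n ∧
      (-1 : k[X]) ^ g.natDegree * _root_.resultant (g.map C) (f.map C - C X) = p ^ n :=
  resultant_power_of_irreducible_general f g hg hgirr
end

section
/- Let k be a field and f, g ∈ k[Y] monic polynomials. If h(T) = (-1)^(deg g) · Res_Y(g(Y), f(Y) - T) is irreducible in k[T], then g is irreducible in k[Y]. -/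
open Polynomial

theorem neg_one_pow_mul_resultant_eq_prod_roots {K : Type*} [Field K] (f g : K[X])
    (hg : g.Monic) (hs : g.Splits) :
    (-1) ^ g.natDegree * (g.map C).resultant (f.map C - C X) =
      (g.roots.map fun α ↦ X - C (f.eval α)).prod := by
  rw [resultant_eq_prod_eval _ _ _ le_rfl (hs.map C), (hg.map C).leadingCoeff, one_pow, one_mul,
    hs.roots_map, hs.natDegree_eq_card_roots, ← Multiset.card_map C,
    ← Multiset.card_map (fun x ↦ eval x (f.map C - C X)), ← Multiset.prod_map_neg,
    Multiset.map_map, Multiset.map_map]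
  refine congrArg _ (Multiset.map_congr rfl fun α _ ↦ ?_)
  simp [eval_map, eval₂_at_apply]

theorem map_resultant_map_C_sub_C_X {R S : Type*} [CommRing R] [CommRing S] {φ : R →+* S}
    (hφ : Function.Injective φ) (f g : R[X]) :
    ((g.map C).resultant (f.map C - C X)).map φ =
      ((g.map φ).map C).resultant ((f.map φ).map C - C X) := by
  have hinj : Function.Injective (mapRingHom φ) := map_injective φ hφ
  have hC : (mapRingHom φ).comp C = C.comp φ := by ext; simp
  have hg : (g.map C).map (mapRingHom φ) = (g.map φ).map C := by
    rw [Polynomial.map_map, hC, ← Polynomial.map_map]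
  have hf : (f.map C - C X).map (mapRingHom φ) = (f.map φ).map C - C X := by
    rw [Polynomial.map_sub, Polynomial.map_map, hC, ← Polynomial.map_map]
    simp
  rw [← coe_mapRingHom, ← resultant_map_map, hg, hf, ← natDegree_map_eq_of_injective hinj, hg,
    ← natDegree_map_eq_of_injective hinj (f.map C - C X), hf]
  rfl

theorem map_neg_one_pow_mul_resultant_eq_prod_roots {k L : Type*} [Field k] [Field L] [Algebra k L]
    (f g : k[X]) (hg : g.Monic) (hs : (g.map (algebraMap k L)).Splits) :
    ((-1) ^ g.natDegree * _root_.resultant (g.map C) (f.map C - C X)).map (algebraMap k L) =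
      (((g.map (algebraMap k L)).roots.map (aeval · f)).map (X - C ·)).prod := by
  rw [Polynomial.map_mul, Polynomial.map_pow, Polynomial.map_neg, Polynomial.map_one,
    resultant_eq_polynomial_resultant, map_resultant_map_C_sub_C_X (algebraMap k L).injective,
    ← natDegree_map (f := algebraMap k L),
    neg_one_pow_mul_resultant_eq_prod_roots _ _ (hg.map _) hs,
    Multiset.map_map]
  simp only [Function.comp_def, eval_map_algebraMap]

open IntermediateField in
theorem natDegree_minpoly_aeval_le {K L : Type*} [Field K] [Field L] [Algebra K L] (f : K[X])
    {x : L} (hx : IsIntegral K x) :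
    (minpoly K (aeval x f)).natDegree ≤ (minpoly K x).natDegree := by
  have := adjoin.finiteDimensional hx
  rw [← adjoin.finrank hx, ← AdjoinSimple.algebraMap_gen K x,
    aeval_algebraMap_apply, minpoly.algebraMap_eq (algebraMap K⟮x⟯ L).injective]
  exact minpoly.natDegree_le _

theorem Polynomial.Monic.irreducible_of_natDegree_le_minpoly {K L : Type*} [Field K] [CommRing L]
    [IsDomain L] [Algebra K L] {g : K[X]} (hg : g.Monic) {x : L} (hx : aeval x g = 0)
    (hle : g.natDegree ≤ (minpoly K x).natDegree) : Irreducible g := by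
  have hint : IsIntegral K x := ⟨g, hg, hx⟩
  rw [eq_of_monic_of_dvd_of_natDegree_le (minpoly.monic hint) hg (minpoly.dvd K x hx) hle]
  exact minpoly.irreducible hint

theorem irreducible_of_resultant_irreducible_general {k : Type*} [Field k]
    (f g : k[X]) (hg : g.Monic) (hdeg : 0 < g.natDegree)
    (hh : Irreducible ((-1 : k[X]) ^ g.natDegree * _root_.resultant (g.map C) (f.map C - C X))) :
    Irreducible g := by
  set h := (-1 : k[X]) ^ g.natDegree * _root_.resultant (g.map C) (f.map C - C X)
  set L := SplittingField g
  have hs := SplittingField.splits g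
  set zeros := (g.map (algebraMap k L)).roots
  have hprod : h.map (algebraMap k L) = ((zeros.map (aeval · f)).map (X - C ·)).prod :=
    map_neg_one_pow_mul_resultant_eq_prod_roots f g hg hs
  obtain ⟨β, hβ⟩ : ∃ β, β ∈ zeros := by
    rw [← Multiset.card_pos_iff_exists_mem, ← hs.natDegree_eq_card_roots, natDegree_map]
    exact hdeg
  have hmonic : h.Monic := by
    rw [← monic_map_iff (f := algebraMap k L), hprod]
    exact monic_multiset_prod_of_monic _ _ fun a _ ↦ monic_X_sub_C a
  have hdegh : h.natDegree = g.natDegree := by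
    rw [← natDegree_map (f := algebraMap k L), hprod, natDegree_multiset_prod_X_sub_C_eq_card,
      Multiset.card_map, ← hs.natDegree_eq_card_roots, natDegree_map]
  have hroot : aeval (aeval β f) h = 0 := by
    rw [← eval_map_algebraMap, hprod, eval_multiset_prod]
    refine Multiset.prod_eq_zero (Multiset.mem_map.2 ⟨X - C (aeval β f), ?_, by simp⟩)
    exact Multiset.mem_map_of_mem _ (Multiset.mem_map_of_mem _ hβ)
  have hmin : minpoly k (aeval β f) = h :=
    (minpoly.eq_of_irreducible_of_monic hh hroot hmonic).symm
  refine hg.irreducible_of_natDegree_le_minpoly (x := β) ?_ ?_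
  · exact (mem_roots_map hg.ne_zero).1 hβ
  · rw [← hdegh, ← hmin]
    exact natDegree_minpoly_aeval_le f (Algebra.IsIntegral.isIntegral β)

/-- If `f, g ∈ k[Y]` are monic and `h = (-1)^(deg g) · Res_Y(g, f - T)` is irreducible
in `k[T]`, then `g` is irreducible in `k[Y]`. -/
theorem irreducible_of_resultant_irreducible {k : Type*} [Field k]
    (f g : k[X]) (hf : f.Monic) (hg : g.Monic) (hdeg : 0 < g.natDegree)
    (hh : Irreducible ((-1 : k[X]) ^ g.natDegree * _root_.resultant (g.map C) (f.map C - C X))) :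
    Irreducible g :=
  irreducible_of_resultant_irreducible_general f g hg hdeg hh
end

section
/- For coprime positive integers p and q, the polynomial T^p - X^q is irreducible in k[X, T] for any field k. -/
open MvPolynomial

open Polynomial in
/-- Auxiliary: for `p` odd, `q > 0` coprime to `p`, `Y^p - X^q` is irreducible in `(k[X])[Y]`. -/
lemma aux_irred {k : Type*} [Field k] (p q : ℕ) (hodd : Odd p) (hq : 0 < q)
    (hpq : Nat.Coprime p q) :
    Irreducible (Polynomial.X ^ p - Polynomial.C ((Polynomial.X : Polynomial k) ^ q)) := by
  have hp0 : p ≠ 0 := by rintro rfl; simp at hodd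
  have hm : (Polynomial.X ^ p - Polynomial.C ((Polynomial.X : Polynomial k) ^ q)).Monic :=
    monic_X_pow_sub_C _ hp0
  rw [hm.irreducible_iff_irreducible_map_fraction_map (K := RatFunc k)]
  rw [Polynomial.map_sub, Polynomial.map_pow, Polynomial.map_X, Polynomial.map_C]
  apply X_pow_sub_C_irreducible_of_odd hodd
  intro l hl hlp b hb
  -- b is integral over k[X], hence a polynomial
  have hint : IsIntegral (Polynomial k) b := by
    refine ⟨Polynomial.X ^ l - Polynomial.C ((Polynomial.X : Polynomial k) ^ q),
      monic_X_pow_sub_C _ hl.ne_zero, ?_⟩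
    simp [Polynomial.eval₂_sub, hb]
  obtain ⟨c, rfl⟩ := IsIntegrallyClosed.isIntegral_iff.mp hint
  rw [← map_pow] at hb
  have hc : c ^ l = (Polynomial.X : Polynomial k) ^ q :=
    IsFractionRing.injective (Polynomial k) (RatFunc k) hb
  have hdeg : l * c.natDegree = q := by
    have := congrArg Polynomial.natDegree hc
    simpa [Polynomial.natDegree_pow] using this
  exact Nat.Prime.one_lt hl |>.ne' (Nat.eq_one_of_dvd_coprimes hpq hlp ⟨_, hdeg.symm⟩)

/-- For coprime positive integers `p, q`, the polynomial `T^p - X^q` is irreducible in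
`k[X, T]` for any field `k` (here `X 0` plays the role of `X` and `X 1` the role of `T`). -/
theorem irreducible_Tp_sub_Xq {k : Type*} [Field k] (p q : ℕ)
    (hp : 0 < p) (hq : 0 < q) (hpq : Nat.Coprime p q) :
    Irreducible ((X 1 : MvPolynomial (Fin 2) k) ^ p - X 0 ^ q) := by
  -- the equivalence `k[X₀, X₁] ≃ (k[X])[Y]` with `X₀ ↦ Y`, `X₁ ↦ C X`
  let e : MvPolynomial (Fin 2) k ≃ₐ[k] Polynomial (Polynomial k) :=
    (finSuccEquiv k 1).trans (Polynomial.mapAlgEquiv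
      ((renameEquiv k (Equiv.equivPUnit.{1,1} (Fin 1))).trans (pUnitAlgEquiv k)))
  have he0 : e (X 0) = Polynomial.X := by
    simp [e, finSuccEquiv_X_zero, Polynomial.coe_mapAlgEquiv]
  have he1 : e (X 1) = Polynomial.C Polynomial.X := by
    have : (X 1 : MvPolynomial (Fin 2) k) = X (Fin.succ 0) := rfl
    simp [e, this, finSuccEquiv_X_succ, Polynomial.coe_mapAlgEquiv]
  rcases (Nat.even_or_odd p).symm with hodd | heven
  · -- p odd: swap the variables first
    let e' := (renameEquiv k (Equiv.swap (0 : Fin 2) 1)).trans e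
    refine (MulEquiv.irreducible_iff e'.toRingEquiv).mp ?_
    have h1 : e' (X 1) = Polynomial.X := by
      simp [e', Equiv.swap_apply_right, he0]
    have h0 : e' (X 0) = Polynomial.C Polynomial.X := by
      simp [e', Equiv.swap_apply_left, he1]
    have : e' ((X 1 : MvPolynomial (Fin 2) k) ^ p - X 0 ^ q)
        = Polynomial.X ^ p - Polynomial.C ((Polynomial.X : Polynomial k) ^ q) := by
      rw [map_sub, map_pow, map_pow, h0, h1, ← map_pow]
    rw [show e'.toRingEquiv
        ((X 1 : MvPolynomial (Fin 2) k) ^ p - X 0 ^ q) = _ from this]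
    exact aux_irred p q hodd hq hpq
  · -- p even, hence q odd
    have hqodd : Odd q := by
      rcases (Nat.even_or_odd q).symm with h | h
      · exact h
      · exfalso
        have h2 : (2 : ℕ) ∣ Nat.gcd p q :=
          Nat.dvd_gcd heven.two_dvd h.two_dvd
        rw [hpq] at h2
        omega
    refine (MulEquiv.irreducible_iff e.toRingEquiv).mp ?_
    have : e ((X 1 : MvPolynomial (Fin 2) k) ^ p - X 0 ^ q)
        = -(Polynomial.X ^ q - Polynomial.C ((Polynomial.X : Polynomial k) ^ p)) := by
      rw [map_sub, map_pow, map_pow, he0, he1, ← map_pow]; ring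
    rw [show e.toRingEquiv
        ((X 1 : MvPolynomial (Fin 2) k) ^ p - X 0 ^ q) = _ from this]
    have hirr := aux_irred (k := k) q p hqodd hp hpq.symm
    exact (Associated.irreducible ⟨-1, by simp⟩ hirr)
end
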